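/- arXiv:2506.15940 — 8 statements merged into one kernel-verified Lean document; each statement's English description precedes it below -/
import Mathlib

section
/- Let H and W be positive integers, A : Fin H → Matrix (Fin W) (Fin W) ℝ, B : Fin W → Matrix (Fin H) (Fin H) ℝ, and let M^A and M^B be the associated horizontal-type and vertical-type matrices. Then for every vector x : Fin H × Fin W → ℝ and every (i,j) ∈ Fin H × Fin W, the product ((M^A * M^B).mulVec x)(i,j) equals Y_{i,j}, where Z ∈ Matrix (Fin H) (Fin W) ℝ is defined column-wise by Z_{i,l} = ∑_{k ∈ Fin H} B^l_{i,k} · x(k,l) (i.e. the l-th column of Z is B^l times the l-th column of X) and Y is defined row-wise by Y_{i,j} = ∑_{l ∈ Fin W} A^i_{j,l} · Z_{i,l} (i.e. the i-th row of Y is A^i times the i-th row of Z). -/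
/-! By associativity `(M^A * M^B) x = M^A (M^B x)`. The vertical-type matrix multiplies each
column of `X` by its own `B^l`, which gives `Z`; the horizontal-type matrix then multiplies each
row of `Z` by its own `A^i`, which gives `Y`. -/

open Matrix

namespace Matrix

variable {R m n : Type*} [NonUnitalNonAssocSemiring R]

/-- The horizontal-type matrix `M^A`: block `i` acts by `A i` on the `i`-th row of the grid. -/
def horizontalType [DecidableEq m] (A : m → Matrix n n R) : Matrix (m × n) (m × n) R :=
  fun p q => if q.1 = p.1 then A p.1 p.2 q.2 else 0

/-- The vertical-type matrix `M^B`: block `l` acts by `B l` on the `l`-th column of the grid. -/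
def verticalType [DecidableEq n] (B : n → Matrix m m R) : Matrix (m × n) (m × n) R :=
  fun p q => if p.2 = q.2 then B q.2 p.1 q.1 else 0

theorem horizontalType_mulVec_apply [Fintype m] [Fintype n] [DecidableEq m]
    (A : m → Matrix n n R) (x : m × n → R) (i : m) (j : n) :
    (horizontalType A *ᵥ x) (i, j) = ∑ l, A i j l * x (i, l) := by
  simp [horizontalType, mulVec, dotProduct, Fintype.sum_prod_type, ite_mul]

theorem verticalType_mulVec_apply [Fintype m] [Fintype n] [DecidableEq n]
    (B : n → Matrix m m R) (x : m × n → R) (i : m) (j : n) :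
    (verticalType B *ᵥ x) (i, j) = ∑ k, B j i k * x (k, j) := by
  simp [verticalType, mulVec, dotProduct, Fintype.sum_prod_type, ite_mul]

end Matrix

theorem efficient_matrix_multiplication_general (H W : ℕ)
    (A : Fin H → Matrix (Fin W) (Fin W) ℝ)
    (B : Fin W → Matrix (Fin H) (Fin H) ℝ)
    (MA MB : Matrix (Fin H × Fin W) (Fin H × Fin W) ℝ)
    (hMA : ∀ (i k : Fin H) (j l : Fin W),
      MA (i, j) (k, l) = if k = i then A i j l else 0)
    (hMB : ∀ (i k : Fin H) (j l : Fin W),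
      MB (i, j) (k, l) = if j = l then B l i k else 0)
    (x : Fin H × Fin W → ℝ)
    (Z Y : Matrix (Fin H) (Fin W) ℝ)
    (hZ : ∀ (i : Fin H) (l : Fin W), Z i l = ∑ k : Fin H, B l i k * x (k, l))
    (hY : ∀ (i : Fin H) (j : Fin W), Y i j = ∑ l : Fin W, A i j l * Z i l)
    (i : Fin H) (j : Fin W) :
    ((MA * MB).mulVec x) (i, j) = Y i j := by
  have hMA' : MA = horizontalType A := by
    ext ⟨i, j⟩ ⟨k, l⟩
    exact hMA i k j l
  have hMB' : MB = verticalType B := by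
    ext ⟨i, j⟩ ⟨k, l⟩
    exact hMB i k j l
  rw [← mulVec_mulVec, hMA', hMB', horizontalType_mulVec_apply, hY]
  simp only [verticalType_mulVec_apply, hZ]

/-- **Theorem 2 (Efficient Matrix Multiplication).**
For the horizontal-type matrix `MA` and the vertical-type matrix `MB`,
`((MA * MB).mulVec x) (i,j) = Y i j`, where `Z` is computed column-wise by
`Z i l = ∑ k, B l i k * x (k,l)` and `Y` row-wise by
`Y i j = ∑ l, A i j l * Z i l`. -/
theorem efficient_matrix_multiplication (H W : ℕ) (hH : 0 < H) (hW : 0 < W)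
    (A : Fin H → Matrix (Fin W) (Fin W) ℝ)
    (B : Fin W → Matrix (Fin H) (Fin H) ℝ)
    (MA MB : Matrix (Fin H × Fin W) (Fin H × Fin W) ℝ)
    (hMA : ∀ (i k : Fin H) (j l : Fin W),
      MA (i, j) (k, l) = if k = i then A i j l else 0)
    (hMB : ∀ (i k : Fin H) (j l : Fin W),
      MB (i, j) (k, l) = if j = l then B l i k else 0)
    (x : Fin H × Fin W → ℝ)
    (Z Y : Matrix (Fin H) (Fin W) ℝ)
    (hZ : ∀ (i : Fin H) (l : Fin W), Z i l = ∑ k : Fin H, B l i k * x (k, l))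
    (hY : ∀ (i : Fin H) (j : Fin W), Y i j = ∑ l : Fin W, A i j l * Z i l)
    (i : Fin H) (j : Fin W) :
    ((MA * MB).mulVec x) (i, j) = Y i j :=
  efficient_matrix_multiplication_general H W A B MA MB hMA hMB x Z Y hZ hY i j
end

section
/- Let H and W be positive integers, let α, β : Fin H → Fin W → ℝ be decay factors, and let L be the V2H polyline path mask, L_{(i,j),(k,l)} = α_{i,j:l} · β_{i:k,l}. Define the horizontal scanning mask L^H by L^H_{(i,j),(k,l)} = α_{i,j:l} if k = i and 0 otherwise, the vertical scanning mask L^V by L^V_{(i,j),(k,l)} = β_{i:k,l} if j = l and 0 otherwise, and the full matrices L̂^H_{(i,j),(k,l)} = α_{i,j:l} and L̂^V_{(i,j),(k,l)} = β_{i:k,l}. Then L = L^H * L^V (matrix product) and L = L̂^H ⊙ L̂^V (Hadamard product). -/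
open Matrix

/-- Only the path `(i, j) → (i, l) → (k, l)` contributes to the product. -/
theorem Matrix.mul_apply_of_sameRow_of_sameCol {ι κ R : Type*} [Fintype ι] [Fintype κ]
    [DecidableEq ι] [DecidableEq κ] [NonUnitalNonAssocSemiring R]
    (A B : Matrix (ι × κ) (ι × κ) R) (a : ι → κ → κ → R) (b : ι → ι → κ → R)
    (hA : ∀ i k j l, A (i, j) (k, l) = if k = i then a i j l else 0)
    (hB : ∀ i k j l, B (i, j) (k, l) = if j = l then b i k l else 0)
    (i k : ι) (j l : κ) :
    (A * B) (i, j) (k, l) = a i j l * b i k l := by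
  simp [mul_apply, Fintype.sum_prod_type, hA, hB, ite_mul, mul_ite]

theorem polyline_mask_decomposition_general (H W : ℕ)
    (α β : Fin H → Fin W → ℝ)
    (L LH LV LHhat LVhat : Matrix (Fin H × Fin W) (Fin H × Fin W) ℝ)
    (hL : ∀ (i k : Fin H) (j l : Fin W),
      L (i, j) (k, l) = (∏ n ∈ Finset.Ioc (min j l) (max j l), α i n)
        * (∏ n ∈ Finset.Ioc (min i k) (max i k), β n l))
    (hLH : ∀ (i k : Fin H) (j l : Fin W),
      LH (i, j) (k, l) =
        if k = i then ∏ n ∈ Finset.Ioc (min j l) (max j l), α i n else 0)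
    (hLV : ∀ (i k : Fin H) (j l : Fin W),
      LV (i, j) (k, l) =
        if j = l then ∏ n ∈ Finset.Ioc (min i k) (max i k), β n l else 0)
    (hLHhat : ∀ (i k : Fin H) (j l : Fin W),
      LHhat (i, j) (k, l) = ∏ n ∈ Finset.Ioc (min j l) (max j l), α i n)
    (hLVhat : ∀ (i k : Fin H) (j l : Fin W),
      LVhat (i, j) (k, l) = ∏ n ∈ Finset.Ioc (min i k) (max i k), β n l) :
    L = LH * LV ∧ L = LHhat ⊙ LVhat := by
  constructor
  · ext ⟨i, j⟩ ⟨k, l⟩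
    rw [hL, mul_apply_of_sameRow_of_sameCol LH LV _ _ hLH hLV]
  · ext ⟨i, j⟩ ⟨k, l⟩
    rw [hadamard_apply, hL, hLHhat, hLVhat]

/-- Decomposition of the V2H polyline path mask:
`L = LH * LV` (matrix product) and `L = LHhat ⊙ LVhat` (Hadamard product),
where `α i (j:l) = ∏ n ∈ Ioc (min j l) (max j l), α i n` and
`β (i:k) l = ∏ n ∈ Ioc (min i k) (max i k), β n l`. -/
theorem polyline_mask_decomposition (H W : ℕ) (hH : 0 < H) (hW : 0 < W)
    (α β : Fin H → Fin W → ℝ)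
    (L LH LV LHhat LVhat : Matrix (Fin H × Fin W) (Fin H × Fin W) ℝ)
    (hL : ∀ (i k : Fin H) (j l : Fin W),
      L (i, j) (k, l) = (∏ n ∈ Finset.Ioc (min j l) (max j l), α i n)
        * (∏ n ∈ Finset.Ioc (min i k) (max i k), β n l))
    (hLH : ∀ (i k : Fin H) (j l : Fin W),
      LH (i, j) (k, l) =
        if k = i then ∏ n ∈ Finset.Ioc (min j l) (max j l), α i n else 0)
    (hLV : ∀ (i k : Fin H) (j l : Fin W),
      LV (i, j) (k, l) =
        if j = l then ∏ n ∈ Finset.Ioc (min i k) (max i k), β n l else 0)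
    (hLHhat : ∀ (i k : Fin H) (j l : Fin W),
      LHhat (i, j) (k, l) = ∏ n ∈ Finset.Ioc (min j l) (max j l), α i n)
    (hLVhat : ∀ (i k : Fin H) (j l : Fin W),
      LVhat (i, j) (k, l) = ∏ n ∈ Finset.Ioc (min i k) (max i k), β n l) :
    L = LH * LV ∧ L = LHhat ⊙ LVhat :=
  polyline_mask_decomposition_general H W α β L LH LV LHhat LVhat hL hLH hLV hLHhat hLVhat
end

section
/- Let H and W be positive integers, let α, β : Fin H → Fin W → ℝ be decay factors, and let L̃ be the H2V polyline path mask, L̃_{(i,j),(k,l)} = β_{i:k,j} · α_{k,j:l}. With the horizontal scanning mask L^H (L^H_{(i,j),(k,l)} = α_{i,j:l} if k = i, else 0) and the vertical scanning mask L^V (L^V_{(i,j),(k,l)} = β_{i:k,l} if j = l, else 0), the H2V mask factors in the reversed order: L̃ = L^V * L^H. -/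
open Matrix

theorem Matrix.mul_apply_prod_of_sameCol_of_sameRow {ι κ R : Type*} [Fintype ι] [Fintype κ]
    [NonUnitalNonAssocSemiring R] (A B : Matrix (ι × κ) (ι × κ) R)
    (hA : ∀ i k j l, j ≠ l → A (i, j) (k, l) = 0)
    (hB : ∀ i k j l, k ≠ i → B (i, j) (k, l) = 0) (i k : ι) (j l : κ) :
    (A * B) (i, j) (k, l) = A (i, j) (k, j) * B (k, j) (k, l) := by
  rw [mul_apply, Fintype.sum_prod_type, Fintype.sum_eq_single k, Fintype.sum_eq_single j]
  · exact fun n hn => by rw [hA i k j n (Ne.symm hn), zero_mul]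
  · exact fun m hm => Fintype.sum_eq_zero _ fun n => by rw [hB m k n l (Ne.symm hm), mul_zero]

theorem h2v_mask_decomposition_general (H W : ℕ)
    (α β : Fin H → Fin W → ℝ)
    (Ltil LH LV : Matrix (Fin H × Fin W) (Fin H × Fin W) ℝ)
    (hLtil : ∀ (i k : Fin H) (j l : Fin W),
      Ltil (i, j) (k, l) = (∏ n ∈ Finset.Ioc (min i k) (max i k), β n j)
        * (∏ n ∈ Finset.Ioc (min j l) (max j l), α k n))
    (hLH : ∀ (i k : Fin H) (j l : Fin W),
      LH (i, j) (k, l) =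
        if k = i then ∏ n ∈ Finset.Ioc (min j l) (max j l), α i n else 0)
    (hLV : ∀ (i k : Fin H) (j l : Fin W),
      LV (i, j) (k, l) =
        if j = l then ∏ n ∈ Finset.Ioc (min i k) (max i k), β n l else 0) :
    Ltil = LV * LH := by
  have hLV_col : ∀ i k j l, j ≠ l → LV (i, j) (k, l) = 0 := fun i k j l h => by
    rw [hLV, if_neg h]
  have hLH_row : ∀ i k j l, k ≠ i → LH (i, j) (k, l) = 0 := fun i k j l h => by
    rw [hLH, if_neg h]
  ext ⟨i, j⟩ ⟨k, l⟩
  rw [Matrix.mul_apply_prod_of_sameCol_of_sameRow LV LH hLV_col hLH_row, hLtil, hLV, hLH,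
    if_pos rfl, if_pos rfl]

/-- Decomposition of the H2V polyline path mask in the reversed order:
`L̃ = LV * LH`. -/
theorem h2v_mask_decomposition (H W : ℕ) (hH : 0 < H) (hW : 0 < W)
    (α β : Fin H → Fin W → ℝ)
    (Ltil LH LV : Matrix (Fin H × Fin W) (Fin H × Fin W) ℝ)
    (hLtil : ∀ (i k : Fin H) (j l : Fin W),
      Ltil (i, j) (k, l) = (∏ n ∈ Finset.Ioc (min i k) (max i k), β n j)
        * (∏ n ∈ Finset.Ioc (min j l) (max j l), α k n))
    (hLH : ∀ (i k : Fin H) (j l : Fin W),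
      LH (i, j) (k, l) =
        if k = i then ∏ n ∈ Finset.Ioc (min j l) (max j l), α i n else 0)
    (hLV : ∀ (i k : Fin H) (j l : Fin W),
      LV (i, j) (k, l) =
        if j = l then ∏ n ∈ Finset.Ioc (min i k) (max i k), β n l else 0) :
    Ltil = LV * LH :=
  h2v_mask_decomposition_general H W α β Ltil LH LV hLtil hLH hLV
end

section
/- Let H and W be positive integers and let α, β : Fin H → Fin W → ℝ be decay factors. Then the H2V polyline path mask is the transpose of the V2H polyline path mask: for all i, k ∈ Fin H and j, l ∈ Fin W, L̃_{(i,j),(k,l)} = L_{(k,l),(i,j)}, i.e. L̃ = Lᵀ. Consequently, the 2D polyline path mask L^{2D} = L + L̃ is a symmetric matrix: (L^{2D})ᵀ = L^{2D}. -/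
open Matrix

theorem polyline_mask_symmetry_general (H W : ℕ)
    (α β : Fin H → Fin W → ℝ)
    (L Ltil : Matrix (Fin H × Fin W) (Fin H × Fin W) ℝ)
    (hL : ∀ (i k : Fin H) (j l : Fin W),
      L (i, j) (k, l) = (∏ n ∈ Finset.Ioc (min j l) (max j l), α i n)
        * (∏ n ∈ Finset.Ioc (min i k) (max i k), β n l))
    (hLtil : ∀ (i k : Fin H) (j l : Fin W),
      Ltil (i, j) (k, l) = (∏ n ∈ Finset.Ioc (min i k) (max i k), β n j)
        * (∏ n ∈ Finset.Ioc (min j l) (max j l), α k n)) :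
    (∀ (i k : Fin H) (j l : Fin W), Ltil (i, j) (k, l) = L (k, l) (i, j))
      ∧ Ltil = Lᵀ ∧ (L + Ltil)ᵀ = L + Ltil := by
  -- Both masks multiply over the same two intervals, which do not depend on the order of their endpoints.
  have entry : ∀ (i k : Fin H) (j l : Fin W), Ltil (i, j) (k, l) = L (k, l) (i, j) := by
    intro i k j l
    rw [hLtil, hL, min_comm l, max_comm l, min_comm k, max_comm k, mul_comm]
  have transpose_eq : Ltil = Lᵀ := by
    ext ⟨i, j⟩ ⟨k, l⟩
    exact entry i k j l
  refine ⟨entry, transpose_eq, ?_⟩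
  rw [transpose_eq]
  exact (isSymm_add_transpose_self L).eq

/-- The H2V polyline path mask is the transpose of the V2H polyline path mask,
and consequently the 2D polyline path mask `L + L̃` is symmetric. -/
theorem polyline_mask_symmetry (H W : ℕ) (hH : 0 < H) (hW : 0 < W)
    (α β : Fin H → Fin W → ℝ)
    (L Ltil : Matrix (Fin H × Fin W) (Fin H × Fin W) ℝ)
    (hL : ∀ (i k : Fin H) (j l : Fin W),
      L (i, j) (k, l) = (∏ n ∈ Finset.Ioc (min j l) (max j l), α i n)
        * (∏ n ∈ Finset.Ioc (min i k) (max i k), β n l))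
    (hLtil : ∀ (i k : Fin H) (j l : Fin W),
      Ltil (i, j) (k, l) = (∏ n ∈ Finset.Ioc (min i k) (max i k), β n j)
        * (∏ n ∈ Finset.Ioc (min j l) (max j l), α k n)) :
    (∀ (i k : Fin H) (j l : Fin W), Ltil (i, j) (k, l) = L (k, l) (i, j))
      ∧ Ltil = Lᵀ ∧ (L + Ltil)ᵀ = L + Ltil :=
  polyline_mask_symmetry_general H W α β L Ltil hL hLtil
end

section
/- Let H and W be positive integers and let SA, A : Fin H → Matrix (Fin W) (Fin W) ℝ and SB, B : Fin W → Matrix (Fin H) (Fin H) ℝ be families of matrices. Let S^H and L^H be the horizontal-type matrices built from SA and A respectively (nonzero entries S^H_{(i,j),(i,l)} = SA^i_{j,l}, L^H_{(i,j),(i,l)} = A^i_{j,l}), and let S^V and L^V be the vertical-type matrices built from SB and B respectively (nonzero entries S^V_{(i,j),(k,j)} = SB^j_{i,k}, L^V_{(i,j),(k,j)} = B^j_{i,k}). Then (S^H * S^V) ⊙ (L^H * L^V) = (S^H ⊙ L^H) * (S^V ⊙ L^V), where ⊙ is the Hadamard product and * is matrix multiplication. -/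
/-!
A horizontal-type matrix only moves the column index and a vertical-type matrix only moves the
row index of a pixel, so in the product `M * N` of a horizontal and a vertical matrix the entry
at `((i, j), (k, l))` has the single path `(i, j) → (i, l) → (k, l)`: it is the product
`M (i, j) (i, l) * N (i, l) (k, l)`. Entrywise products of such single-term entries factor, and
Hadamard products of horizontal (vertical) matrices are again horizontal (vertical).
-/

open Matrix

namespace Matrix

variable {ι κ ν μ α : Type*}

def IsHorizontal [Zero α] (M : Matrix (ι × κ) (ι × ν) α) : Prop :=
  ∀ ⦃i k : ι⦄ (j : κ) (l : ν), k ≠ i → M (i, j) (k, l) = 0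

def IsVertical [Zero α] (N : Matrix (ι × ν) (μ × ν) α) : Prop :=
  ∀ (i : ι) (k : μ) ⦃j l : ν⦄, j ≠ l → N (i, j) (k, l) = 0

theorem IsHorizontal.hadamard [MulZeroClass α] {M : Matrix (ι × κ) (ι × ν) α}
    (hM : M.IsHorizontal) (M' : Matrix (ι × κ) (ι × ν) α) : (M ⊙ M').IsHorizontal :=
  fun _ _ j l hki => by rw [hadamard_apply, hM j l hki, zero_mul]

theorem IsVertical.hadamard [MulZeroClass α] {N : Matrix (ι × ν) (μ × ν) α}
    (hN : N.IsVertical) (N' : Matrix (ι × ν) (μ × ν) α) : (N ⊙ N').IsVertical :=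
  fun i k _ _ hjl => by rw [hadamard_apply, hN i k hjl, zero_mul]

theorem IsHorizontal.mul_apply_of_isVertical [Fintype ι] [Fintype ν]
    [NonUnitalNonAssocSemiring α]
    {M : Matrix (ι × κ) (ι × ν) α} {N : Matrix (ι × ν) (μ × ν) α}
    (hM : M.IsHorizontal) (hN : N.IsVertical) (i : ι) (j : κ) (k : μ) (l : ν) :
    (M * N) (i, j) (k, l) = M (i, j) (i, l) * N (i, l) (k, l) := by
  rw [mul_apply, Fintype.sum_prod_type, Fintype.sum_eq_single i, Fintype.sum_eq_single l]
  · intro b hbl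
    rw [hN i k hbl, mul_zero]
  · intro a hai
    exact Finset.sum_eq_zero fun b _ => by rw [hM j b hai, zero_mul]

theorem IsHorizontal.hadamard_mul_hadamard [Fintype ι] [Fintype ν] [CommSemiring α]
    {M M' : Matrix (ι × κ) (ι × ν) α} {N N' : Matrix (ι × ν) (μ × ν) α}
    (hM : M.IsHorizontal) (hM' : M'.IsHorizontal) (hN : N.IsVertical) (hN' : N'.IsVertical) :
    (M * N) ⊙ (M' * N') = (M ⊙ M') * (N ⊙ N') := by
  ext ⟨i, j⟩ ⟨k, l⟩
  rw [hadamard_apply, hM.mul_apply_of_isVertical hN, hM'.mul_apply_of_isVertical hN',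
    (hM.hadamard M').mul_apply_of_isVertical (hN.hadamard N'), hadamard_apply, hadamard_apply,
    mul_mul_mul_comm]

end Matrix

theorem hadamard_product_factorization_general (H W : ℕ)
    (SA A : Fin H → Matrix (Fin W) (Fin W) ℝ)
    (SB B : Fin W → Matrix (Fin H) (Fin H) ℝ)
    (SH LH SV LV : Matrix (Fin H × Fin W) (Fin H × Fin W) ℝ)
    (hSH : ∀ (i k : Fin H) (j l : Fin W),
      SH (i, j) (k, l) = if k = i then SA i j l else 0)
    (hLH : ∀ (i k : Fin H) (j l : Fin W),
      LH (i, j) (k, l) = if k = i then A i j l else 0)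
    (hSV : ∀ (i k : Fin H) (j l : Fin W),
      SV (i, j) (k, l) = if j = l then SB l i k else 0)
    (hLV : ∀ (i k : Fin H) (j l : Fin W),
      LV (i, j) (k, l) = if j = l then B l i k else 0) :
    (SH * SV) ⊙ (LH * LV) = (SH ⊙ LH) * (SV ⊙ LV) := by
  have hSH' : SH.IsHorizontal := fun i k j l hki => by rw [hSH, if_neg hki]
  have hLH' : LH.IsHorizontal := fun i k j l hki => by rw [hLH, if_neg hki]
  have hSV' : SV.IsVertical := fun i k j l hjl => by rw [hSV, if_neg hjl]
  have hLV' : LV.IsVertical := fun i k j l hjl => by rw [hLV, if_neg hjl]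
  exact hSH'.hadamard_mul_hadamard hLH' hSV' hLV'

/-- Eq. (12) of the paper: for horizontal-type matrices `SH, LH` and
vertical-type matrices `SV, LV`,
`(SH * SV) ⊙ (LH * LV) = (SH ⊙ LH) * (SV ⊙ LV)`. -/
theorem hadamard_product_factorization (H W : ℕ) (hH : 0 < H) (hW : 0 < W)
    (SA A : Fin H → Matrix (Fin W) (Fin W) ℝ)
    (SB B : Fin W → Matrix (Fin H) (Fin H) ℝ)
    (SH LH SV LV : Matrix (Fin H × Fin W) (Fin H × Fin W) ℝ)
    (hSH : ∀ (i k : Fin H) (j l : Fin W),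
      SH (i, j) (k, l) = if k = i then SA i j l else 0)
    (hLH : ∀ (i k : Fin H) (j l : Fin W),
      LH (i, j) (k, l) = if k = i then A i j l else 0)
    (hSV : ∀ (i k : Fin H) (j l : Fin W),
      SV (i, j) (k, l) = if j = l then SB l i k else 0)
    (hLV : ∀ (i k : Fin H) (j l : Fin W),
      LV (i, j) (k, l) = if j = l then B l i k else 0) :
    (SH * SV) ⊙ (LH * LV) = (SH ⊙ LH) * (SV ⊙ LV) :=
  hadamard_product_factorization_general H W SA A SB B SH LH SV LV hSH hLH hSV hLV
end

section
/- Let N, D, C be positive integers, a : Fin N → ℝ, B, C : Fin N → (Fin D → ℝ), and x : Fin N → (Fin C → ℝ). Define hidden states h : Fin N → Matrix (Fin D) (Fin C) ℝ recursively by h_0 = (vecMulVec B_0 x_0) (the outer product with entries (h_0)_{d,c} = B_0(d)·x_0(c)) and, for i ≥ 1, h_i = a_i • h_{i−1} + vecMulVec B_i x_i; and define outputs y_i ∈ Fin C → ℝ by y_i(c) = ∑_{d ∈ Fin D} C_i(d) · (h_i)_{d,c}. Then for every i ∈ Fin N and c ∈ Fin C, y_i(c) = ∑_{j ≤ i} (∏_{m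 = j+1}^{i} a_m) · (∑_{d ∈ Fin D} C_i(d) · B_j(d)) · x_j(c); equivalently, y = ((C Bᵀ) ⊙ L^{1D}) x, where L^{1D}_{i,j} = ∏_{m = j+1}^{i} a_m for i ≥ j (in particular L^{1D}_{i,i} = 1) and L^{1D}_{i,j} = 0 for i < j. -/
/-!
Unrolling the linear recurrence `hᵢ = aᵢ • hᵢ₋₁ + uᵢ` gives
`hᵢ = ∑ j ≤ i, (a_{j+1} ⋯ aᵢ) • u_j`. With `u_j = B_j x_jᵀ`, reading out `yᵢ = Cᵢ hᵢ` is linear,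
and `Cᵢ (B_j x_jᵀ) = (Cᵢ ⬝ᵥ B_j) • x_j` turns each summand into the masked attention term.
-/

open Matrix Finset

namespace Fin

theorem Iic_succ {n : ℕ} (i : Fin n) : Iic i.succ = insert i.succ (Iic i.castSucc) := by
  ext j
  simp only [mem_Iic, mem_insert, Fin.le_def, Fin.ext_iff, val_succ, val_castSucc]
  omega

theorem Ioc_succ_right {n : ℕ} {j : Fin (n + 1)} {i : Fin n} (hj : j ≤ i.castSucc) :
    Ioc j i.succ = insert i.succ (Ioc j i.castSucc) := by
  rw [← orderSucc_castSucc]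
  exact (insert_Ioc_right_eq_Ioc_succ_of_not_isMax hj (not_isMax_of_lt castSucc_lt_succ)).symm

theorem linearRecurrence_eq_sum {R M : Type*} [CommSemiring R] [AddCommMonoid M] [Module R M]
    {n : ℕ} (a : Fin (n + 1) → R) (u s : Fin (n + 1) → M) (h0 : s 0 = u 0)
    (hsucc : ∀ i : Fin n, s i.succ = a i.succ • s i.castSucc + u i.succ) (i : Fin (n + 1)) :
    s i = ∑ j ∈ Iic i, (∏ m ∈ Ioc j i, a m) • u j := by
  induction i using Fin.induction with
  | zero =>
    rw [← bot_eq_zero, Iic_bot, sum_singleton, Ioc_self, prod_empty, one_smul, bot_eq_zero, h0]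
  | succ i ih =>
    rw [hsucc, ih, Iic_succ, sum_insert (by simp), Ioc_self, prod_empty, one_smul, add_comm,
      smul_sum]
    congr 1
    refine sum_congr rfl fun j hj => ?_
    rw [Ioc_succ_right (mem_Iic.mp hj), prod_insert (by simp), mul_smul]

end Fin

theorem mamba2_dual_form_general (N D Cdim : ℕ) (hN : 0 < N)
    (a : Fin N → ℝ)
    (B C : Fin N → Fin D → ℝ)
    (x : Fin N → Fin Cdim → ℝ)
    (h : Fin N → Matrix (Fin D) (Fin Cdim) ℝ)
    (h0 : h ⟨0, hN⟩ = vecMulVec (B ⟨0, hN⟩) (x ⟨0, hN⟩))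
    (hrec : ∀ i : Fin N, (i : ℕ) ≠ 0 →
      h i = a i • h ⟨(i : ℕ) - 1, lt_of_le_of_lt (Nat.sub_le _ _) i.isLt⟩
        + vecMulVec (B i) (x i))
    (y : Fin N → Fin Cdim → ℝ)
    (hy : ∀ (i : Fin N) (c : Fin Cdim), y i c = ∑ d : Fin D, C i d * h i d c)
    (i : Fin N) (c : Fin Cdim) :
    y i c = ∑ j ∈ Finset.Iic i,
      (∏ m ∈ Finset.Ioc j i, a m) * (∑ d : Fin D, C i d * B j d) * x j c := by
  obtain ⟨n, rfl⟩ := Nat.exists_eq_add_one_of_ne_zero hN.ne'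
  have hstate : h i = ∑ j ∈ Iic i, (∏ m ∈ Ioc j i, a m) • vecMulVec (B j) (x j) :=
    Fin.linearRecurrence_eq_sum a _ h (by simpa using h0)
      (fun k => by rw [hrec k.succ (Fin.val_ne_zero_iff.mpr k.succ_ne_zero)]; rfl) i
  have hout : y i = C i ᵥ* h i := funext (hy i)
  rw [hout, hstate, vecMul_sum]
  simp [vecMul_smul, vecMul_vecMulVec, dotProduct, mul_assoc]

/-- The structured-masked-attention (dual) form of the Mamba2 selective
state-space recurrence: if `h 0 = B₀ᵀ x₀`, `h i = a i • h (i-1) + Bᵢᵀ xᵢ`,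
and `y i = Cᵢ (h i)`, then
`y i c = ∑ j ≤ i, (∏ m ∈ Ioc j i, a m) * (∑ d, C i d * B j d) * x j c`. -/
theorem mamba2_dual_form (N D Cdim : ℕ) (hN : 0 < N) (hD : 0 < D) (hC : 0 < Cdim)
    (a : Fin N → ℝ)
    (B C : Fin N → Fin D → ℝ)
    (x : Fin N → Fin Cdim → ℝ)
    (h : Fin N → Matrix (Fin D) (Fin Cdim) ℝ)
    (h0 : h ⟨0, hN⟩ = vecMulVec (B ⟨0, hN⟩) (x ⟨0, hN⟩))
    (hrec : ∀ i : Fin N, (i : ℕ) ≠ 0 →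
      h i = a i • h ⟨(i : ℕ) - 1, lt_of_le_of_lt (Nat.sub_le _ _) i.isLt⟩
        + vecMulVec (B i) (x i))
    (y : Fin N → Fin Cdim → ℝ)
    (hy : ∀ (i : Fin N) (c : Fin Cdim), y i c = ∑ d : Fin D, C i d * h i d c)
    (i : Fin N) (c : Fin Cdim) :
    y i c = ∑ j ∈ Finset.Iic i,
      (∏ m ∈ Finset.Ioc j i, a m) * (∑ d : Fin D, C i d * B j d) * x j c :=
  mamba2_dual_form_general N D Cdim hN a B C x h h0 hrec y hy i c
end

section
/- Let D, H, W be positive integers, index 3D tokens by triples (i,j,k) ∈ Fin D × Fin H × Fin W, and let α, β, γ : Fin D → Fin H → Fin W → ℝ be decay factors along the width, height, and depth axes respectively. Define cumulative products α_{i,j,k:n} = ∏_{r = min(k,n)+1}^{max(k,n)} α_{i,j,r}, β_{i,j:m,n} = ∏_{q = min(j,m)+1}^{max(j,m)} β_{i,q,n}, and γ_{i:l,m,n} = ∏_{p = min(i,l)+1}^{max(i,l)} γ_{p,m,n}. Let L^{3D} be the matrix with entries L^{3D}_{(i,j,k),(l,m,n)} = α_{i,j,k:n} · β_{i,j:m,n}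 · γ_{i:l,m,n}, and define L^H_{(i,j,k),(l,m,n)} = α_{i,j,k:n} if l = i and m = j (else 0), L^V_{(i,j,k),(l,m,n)} = β_{i,j:m,k} if l = i and n = k (else 0), and L^D_{(i,j,k),(l,m,n)} = γ_{i:l,j,k} if m = j and n = k (else 0). Then L^{3D} = L^H * L^V * L^D. -/
/-! `L^H * L^V` is block diagonal in depth, each block being the 2D polyline mask of that depth
slice; multiplying it by `L^D`, which only moves along the depth axis, then leaves a single
nonzero term in each entry of the product. -/

open Matrix

section Masks

variable {R ι κ μ : Type*} [NonUnitalNonAssocSemiring R]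
  [Fintype ι] [Fintype κ] [Fintype μ] [DecidableEq ι] [DecidableEq κ] [DecidableEq μ]

theorem mul_apply_of_width_mask_of_height_mask (A B : Matrix (ι × κ × μ) (ι × κ × μ) R)
    (a : ι → κ → μ → μ → R) (b : ι → κ → κ → μ → R)
    (hA : ∀ i l j m k n, A (i, j, k) (l, m, n) = if l = i ∧ m = j then a i j k n else 0)
    (hB : ∀ i l j m k n, B (i, j, k) (l, m, n) = if l = i ∧ n = k then b i j m k else 0)
    (i l : ι) (j m : κ) (k n : μ) :
    (A * B) (i, j, k) (l, m, n) = if l = i then a i j k n * b i j m n else 0 := by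
  simp only [mul_apply, Fintype.sum_prod_type, hA, hB, ite_and, ite_mul, zero_mul]
  simp [Finset.sum_ite_eq', Finset.sum_ite_eq]

theorem mul_apply_of_slice_mask_of_depth_mask (M C : Matrix (ι × κ × μ) (ι × κ × μ) R)
    (f : ι → κ → μ → κ → μ → R) (c : ι → ι → κ → μ → R)
    (hM : ∀ i l j m k n, M (i, j, k) (l, m, n) = if l = i then f i j k m n else 0)
    (hC : ∀ i l j m k n, C (i, j, k) (l, m, n) = if m = j ∧ n = k then c i l j k else 0)
    (i l : ι) (j m : κ) (k n : μ) :
    (M * C) (i, j, k) (l, m, n) = f i j k m n * c i l m n := by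
  simp only [mul_apply, Fintype.sum_prod_type, hM, hC, ite_and, ite_mul, zero_mul]
  simp [Finset.sum_ite_eq', Finset.sum_ite_eq]

end Masks

theorem polyline_mask_3d_decomposition_general (D H W : ℕ)
    (α β γ : Fin D → Fin H → Fin W → ℝ)
    (L3D LH LV LD : Matrix (Fin D × Fin H × Fin W) (Fin D × Fin H × Fin W) ℝ)
    (hL3D : ∀ (i l : Fin D) (j m : Fin H) (k n : Fin W),
      L3D (i, j, k) (l, m, n)
        = (∏ r ∈ Finset.Ioc (min k n) (max k n), α i j r)
          * (∏ q ∈ Finset.Ioc (min j m) (max j m), β i q n)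
          * (∏ p ∈ Finset.Ioc (min i l) (max i l), γ p m n))
    (hLH : ∀ (i l : Fin D) (j m : Fin H) (k n : Fin W),
      LH (i, j, k) (l, m, n)
        = if l = i ∧ m = j
          then ∏ r ∈ Finset.Ioc (min k n) (max k n), α i j r else 0)
    (hLV : ∀ (i l : Fin D) (j m : Fin H) (k n : Fin W),
      LV (i, j, k) (l, m, n)
        = if l = i ∧ n = k
          then ∏ q ∈ Finset.Ioc (min j m) (max j m), β i q k else 0)
    (hLD : ∀ (i l : Fin D) (j m : Fin H) (k n : Fin W),
      LD (i, j, k) (l, m, n)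
        = if m = j ∧ n = k
          then ∏ p ∈ Finset.Ioc (min i l) (max i l), γ p j k else 0) :
    L3D = LH * LV * LD := by
  ext ⟨i, j, k⟩ ⟨l, m, n⟩
  rw [hL3D, mul_apply_of_slice_mask_of_depth_mask _ _ _ _
    (mul_apply_of_width_mask_of_height_mask LH LV _ _ hLH hLV) hLD]

/-- The 3D polyline path mask decomposes as the product of the horizontal,
vertical, and depth scanning masks: `L3D = LH * LV * LD`. -/
theorem polyline_mask_3d_decomposition (D H W : ℕ) (hD : 0 < D) (hH : 0 < H) (hW : 0 < W)
    (α β γ : Fin D → Fin H → Fin W → ℝ)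
    (L3D LH LV LD : Matrix (Fin D × Fin H × Fin W) (Fin D × Fin H × Fin W) ℝ)
    (hL3D : ∀ (i l : Fin D) (j m : Fin H) (k n : Fin W),
      L3D (i, j, k) (l, m, n)
        = (∏ r ∈ Finset.Ioc (min k n) (max k n), α i j r)
          * (∏ q ∈ Finset.Ioc (min j m) (max j m), β i q n)
          * (∏ p ∈ Finset.Ioc (min i l) (max i l), γ p m n))
    (hLH : ∀ (i l : Fin D) (j m : Fin H) (k n : Fin W),
      LH (i, j, k) (l, m, n)
        = if l = i ∧ m = j
          then ∏ r ∈ Finset.Ioc (min k n) (max k n), α i j r else 0)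
    (hLV : ∀ (i l : Fin D) (j m : Fin H) (k n : Fin W),
      LV (i, j, k) (l, m, n)
        = if l = i ∧ n = k
          then ∏ q ∈ Finset.Ioc (min j m) (max j m), β i q k else 0)
    (hLD : ∀ (i l : Fin D) (j m : Fin H) (k n : Fin W),
      LD (i, j, k) (l, m, n)
        = if m = j ∧ n = k
          then ∏ p ∈ Finset.Ioc (min i l) (max i l), γ p j k else 0) :
    L3D = LH * LV * LD :=
  polyline_mask_3d_decomposition_general D H W α β γ L3D LH LV LD hL3D hLH hLV hLD
end

section
/- Let H and W be positive integers and let α, β : Fin H → Fin W → ℝ be decay factors. Let L^H be the horizontal scanning mask (L^H_{(i,j),(k,l)} = α_{i,j:l} if k = i, else 0) and L^V the vertical scanning mask (L^V_{(i,j),(k,l)} = β_{i:k,l} if j = l, else 0), and let L^{2D} = L + L̃ be the 2D polyline path mask. Then for every vector x : Fin H × Fin W → ℝ, L^{2D}.mulVec x = L^H.mulVec (L^V.mulVec x) + L^V.mulVec (L^H.mulVec x); that is, applying the 2D polyline path mask to a vector equals the vertical scan followed by the horizontal scan, plus the horizontal scan followed by the vertical scan. -/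
open Matrix

namespace Matrix

variable {ι κ R : Type*} [Fintype ι] [Fintype κ] [NonUnitalNonAssocSemiring R]

theorem mul_apply_eq_of_preserves_fst_of_preserves_snd (A B : Matrix (ι × κ) (ι × κ) R)
    (hA : ∀ i k j l, k ≠ i → A (i, j) (k, l) = 0) (hB : ∀ i k j l, j ≠ l → B (i, j) (k, l) = 0)
    (i k : ι) (j l : κ) :
    (A * B) (i, j) (k, l) = A (i, j) (i, l) * B (i, l) (k, l) := by
  rw [mul_apply, Finset.sum_eq_single (i, l)]
  · rintro ⟨a, b⟩ - hab
    by_cases ha : a = i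
    · subst ha
      rw [hB _ _ _ _ fun hb => hab (by rw [hb]), mul_zero]
    · rw [hA _ _ _ _ ha, zero_mul]
  · exact fun h => absurd (Finset.mem_univ _) h

theorem mul_apply_eq_of_preserves_snd_of_preserves_fst (A B : Matrix (ι × κ) (ι × κ) R)
    (hA : ∀ i k j l, j ≠ l → A (i, j) (k, l) = 0) (hB : ∀ i k j l, k ≠ i → B (i, j) (k, l) = 0)
    (i k : ι) (j l : κ) :
    (A * B) (i, j) (k, l) = A (i, j) (k, j) * B (k, j) (k, l) := by
  rw [mul_apply, Finset.sum_eq_single (k, j)]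
  · rintro ⟨a, b⟩ - hab
    by_cases hb : j = b
    · subst hb
      rw [hB _ _ _ _ fun ha => hab (by rw [ha]), mul_zero]
    · rw [hA _ _ _ _ hb, zero_mul]
  · exact fun h => absurd (Finset.mem_univ _) h

end Matrix

theorem polyline_mask_2d_mulVec_general (H W : ℕ)
    (α β : Fin H → Fin W → ℝ)
    (L Ltil LH LV : Matrix (Fin H × Fin W) (Fin H × Fin W) ℝ)
    (hL : ∀ (i k : Fin H) (j l : Fin W),
      L (i, j) (k, l) = (∏ n ∈ Finset.Ioc (min j l) (max j l), α i n)
        * (∏ n ∈ Finset.Ioc (min i k) (max i k), β n l))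
    (hLtil : ∀ (i k : Fin H) (j l : Fin W),
      Ltil (i, j) (k, l) = (∏ n ∈ Finset.Ioc (min i k) (max i k), β n j)
        * (∏ n ∈ Finset.Ioc (min j l) (max j l), α k n))
    (hLH : ∀ (i k : Fin H) (j l : Fin W),
      LH (i, j) (k, l) =
        if k = i then ∏ n ∈ Finset.Ioc (min j l) (max j l), α i n else 0)
    (hLV : ∀ (i k : Fin H) (j l : Fin W),
      LV (i, j) (k, l) =
        if j = l then ∏ n ∈ Finset.Ioc (min i k) (max i k), β n l else 0)
    (x : Fin H × Fin W → ℝ) :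
    (L + Ltil).mulVec x = LH.mulVec (LV.mulVec x) + LV.mulVec (LH.mulVec x) := by
  have hLH_fst : ∀ i k j l, k ≠ i → LH (i, j) (k, l) = 0 := fun i k j l h => by
    rw [hLH, if_neg h]
  have hLV_snd : ∀ i k j l, j ≠ l → LV (i, j) (k, l) = 0 := fun i k j l h => by
    rw [hLV, if_neg h]
  have hL_eq : L = LH * LV := by
    ext ⟨i, j⟩ ⟨k, l⟩
    rw [mul_apply_eq_of_preserves_fst_of_preserves_snd LH LV hLH_fst hLV_snd, hL, hLH, hLV,
      if_pos rfl, if_pos rfl]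
  have hLtil_eq : Ltil = LV * LH := by
    ext ⟨i, j⟩ ⟨k, l⟩
    rw [mul_apply_eq_of_preserves_snd_of_preserves_fst LV LH hLV_snd hLH_fst, hLtil, hLH, hLV,
      if_pos rfl, if_pos rfl]
  rw [hL_eq, hLtil_eq, add_mulVec, mulVec_mulVec, mulVec_mulVec]

/-- Applying the 2D polyline path mask `L + L̃` to a vector equals the
vertical scan followed by the horizontal scan, plus the horizontal scan
followed by the vertical scan. -/
theorem polyline_mask_2d_mulVec (H W : ℕ) (hH : 0 < H) (hW : 0 < W)
    (α β : Fin H → Fin W → ℝ)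
    (L Ltil LH LV : Matrix (Fin H × Fin W) (Fin H × Fin W) ℝ)
    (hL : ∀ (i k : Fin H) (j l : Fin W),
      L (i, j) (k, l) = (∏ n ∈ Finset.Ioc (min j l) (max j l), α i n)
        * (∏ n ∈ Finset.Ioc (min i k) (max i k), β n l))
    (hLtil : ∀ (i k : Fin H) (j l : Fin W),
      Ltil (i, j) (k, l) = (∏ n ∈ Finset.Ioc (min i k) (max i k), β n j)
        * (∏ n ∈ Finset.Ioc (min j l) (max j l), α k n))
    (hLH : ∀ (i k : Fin H) (j l : Fin W),
      LH (i, j) (k, l) =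
        if k = i then ∏ n ∈ Finset.Ioc (min j l) (max j l), α i n else 0)
    (hLV : ∀ (i k : Fin H) (j l : Fin W),
      LV (i, j) (k, l) =
        if j = l then ∏ n ∈ Finset.Ioc (min i k) (max i k), β n l else 0)
    (x : Fin H × Fin W → ℝ) :
    (L + Ltil).mulVec x = LH.mulVec (LV.mulVec x) + LV.mulVec (LH.mulVec x) :=
  polyline_mask_2d_mulVec_general H W α β L Ltil LH LV hL hLtil hLH hLV x
end
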